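/- arXiv:1003.1416 — 7 statements merged into one kernel-verified Lean document; each statement's English description precedes it below -/
import Mathlib

section
/- Let V be a real vector space, η a linear functional on V, ξ ∈ V with η(ξ)=1, and φ, h endomorphisms of V with φ² = −id + ξ·η, hξ = 0, η∘h = 0, h∘φ = −φ∘h, and h² = (κ−1)φ² for a real constant κ < 1. For real μ, set h̃ := (1/(2√(1−κ)))·((2−μ)·(φ∘h) + 2(1−κ)·φ). Then h̃² = (1 − κ − (1−μ/2)²)·φ². -/
theorem stmt_1 {V : Type*} [AddCommGroup V] [Module ℝ V]
    (η : V →ₗ[ℝ] ℝ) (ξ : V) (hξ : η ξ = 1)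
    (φ h : Module.End ℝ V) (κ μ : ℝ) (hκ : κ < 1)
    (hφ2 : φ ^ 2 = -1 + η.smulRight ξ)
    (hhξ : h ξ = 0) (hηh : ∀ v, η (h v) = 0)
    (hanti : h * φ = -(φ * h))
    (hh2 : h ^ 2 = (κ - 1) • φ ^ 2) :
    ((1 / (2 * Real.sqrt (1 - κ))) • ((2 - μ) • (φ * h) + (2 * (1 - κ)) • φ)) ^ 2
      = (1 - κ - (1 - μ / 2) ^ 2) • φ ^ 2 := by
  set e : Module.End ℝ V := η.smulRight ξ with he
  have he2 : e * e = e := by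
    apply LinearMap.ext
    intro v
    simp [he, LinearMap.smulRight_apply, Module.End.mul_apply, hξ, smul_smul]
  have hφ4 : φ ^ 4 = -(φ ^ 2) := by
    have h44 : φ ^ 4 = (φ ^ 2) * (φ ^ 2) := by rw [← pow_add]
    rw [h44, hφ2]
    have expand : (-1 + e) * (-1 + e) = 1 - e - e + e * e := by noncomm_ring
    rw [expand, he2]
    noncomm_ring
  have key1 : (φ * h) * (φ * h) = (κ - 1) • φ ^ 2 := by
    have e1 : (φ * h) * (φ * h) = φ * (h * φ) * h := by noncomm_ring
    rw [e1, hanti]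
    have e2 : φ * -(φ * h) * h = -(φ ^ 2 * h ^ 2) := by noncomm_ring
    rw [e2, hh2, mul_smul_comm]
    have e3 : φ ^ 2 * φ ^ 2 = φ ^ 4 := by rw [← pow_add]
    rw [e3, hφ4, smul_neg, neg_neg]
  have key2 : (φ * h) * φ + φ * (φ * h) = 0 := by
    have e1 : (φ * h) * φ = φ * (h * φ) := by noncomm_ring
    rw [e1, hanti]
    noncomm_ring
  have hs : Real.sqrt (1 - κ) ^ 2 = 1 - κ := Real.sq_sqrt (by linarith)
  have hspos : (0:ℝ) < Real.sqrt (1 - κ) := Real.sqrt_pos.mpr (by linarith)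
  rw [smul_pow]
  have expand : ((2 - μ) • (φ * h) + (2 * (1 - κ)) • φ) ^ 2
      = ((2 - μ) ^ 2) • ((φ * h) * (φ * h))
        + ((2 - μ) * (2 * (1 - κ))) • ((φ * h) * φ + φ * (φ * h))
        + ((2 * (1 - κ)) ^ 2) • (φ * φ) := by
    rw [sq]
    simp only [mul_add, add_mul, smul_mul_assoc, mul_smul_comm, smul_smul, smul_add]
    module
  have pφ : φ * φ = φ ^ 2 := (pow_two φ).symm
  rw [expand, key1, key2, smul_zero, add_zero, pφ, smul_smul, ← add_smul, smul_smul]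
  congr 1
  have hne : Real.sqrt (1 - κ) ≠ 0 := ne_of_gt hspos
  field_simp
  nlinarith [hs, sq_nonneg (Real.sqrt (1 - κ))]
end

section
/- Let V, η, ξ, φ, h, κ, μ be as follows: φ² = −id + ξ·η, hξ = 0, η∘h = 0, h∘φ = −φ∘h, h² = (κ−1)φ², κ < 1, and suppose (1−μ/2)² > 1−κ. Set φ̄ := (1/√((1−μ/2)² − (1−κ)))·((1−μ/2)·φ + φ∘h). Then φ̄² = −id + ξ·η. -/
theorem stmt_2 {V : Type*} [AddCommGroup V] [Module ℝ V]
    (η : V →ₗ[ℝ] ℝ) (ξ : V) (hξ : η ξ = 1)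
    (φ h : Module.End ℝ V) (κ μ : ℝ) (hκ : κ < 1)
    (hμ : (1 - μ / 2) ^ 2 > 1 - κ)
    (hφ2 : φ ^ 2 = -1 + η.smulRight ξ)
    (hhξ : h ξ = 0) (hηh : ∀ v, η (h v) = 0)
    (hanti : h * φ = -(φ * h))
    (hh2 : h ^ 2 = (κ - 1) • φ ^ 2) :
    ((1 / Real.sqrt ((1 - μ / 2) ^ 2 - (1 - κ))) • ((1 - μ / 2) • φ + φ * h)) ^ 2
      = -1 + η.smulRight ξ := by
  set a : ℝ := 1 - μ / 2 with ha
  set P : Module.End ℝ V := η.smulRight ξ with hPdef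
  have hpos : (0:ℝ) < a ^ 2 - (1 - κ) := by linarith
  have hP : P * P = P := by
    ext v
    simp [hPdef, Module.End.mul_apply, LinearMap.smulRight_apply, hξ, mul_comm]
  have hφ4 : φ ^ 2 * φ ^ 2 = -(φ ^ 2) := by
    rw [hφ2]
    have h1 : (-1 + P) * (-1 + P) = 1 - P - P + P * P := by noncomm_ring
    rw [h1, hP]
    noncomm_ring
  have hφh2 : (φ * h) * (φ * h) = (κ - 1) • φ ^ 2 := by
    have h1 : (φ * h) * (φ * h) = φ * (h * φ) * h := by noncomm_ring
    rw [h1, hanti]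
    have h2 : φ * -(φ * h) * h = -(φ ^ 2 * h ^ 2) := by noncomm_ring
    rw [h2, hh2, mul_smul_comm, hφ4, smul_neg, neg_neg]
  have key : ((a • φ + φ * h)) ^ 2 = (a ^ 2 - (1 - κ)) • φ ^ 2 := by
    have expand : ((a • φ + φ * h)) ^ 2
        = (a • φ) * (a • φ) + a • (φ * (φ * h)) + a • ((φ * h) * φ)
            + (φ * h) * (φ * h) := by
      rw [sq]
      simp only [add_mul, mul_add, smul_mul_assoc, mul_smul_comm, smul_add]
      abel
    have hmid : (φ * h) * φ = -(φ * (φ * h)) := by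
      rw [mul_assoc, hanti, mul_neg]
    have hsq : (a • φ) * (a • φ) = (a ^ 2) • φ ^ 2 := by
      rw [smul_mul_assoc, mul_smul_comm, smul_smul, sq, sq]
    rw [expand, hmid, hsq, hφh2, smul_neg, add_neg_cancel_right, ← add_smul]
    ring_nf
  rw [smul_pow, key, smul_smul]
  have hs : Real.sqrt (a ^ 2 - (1 - κ)) ^ 2 = a ^ 2 - (1 - κ) :=
    Real.sq_sqrt hpos.le
  have h1 : (1 / Real.sqrt (a ^ 2 - (1 - κ))) ^ 2 * (a ^ 2 - (1 - κ)) = 1 := by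
    rw [div_pow, one_pow, hs]
    field_simp
  rw [h1, one_smul, hφ2]
end

section
/- Let V, η, ξ, φ, h, κ, μ be as in the previous context (φ² = −id + ξ·η, hξ = 0, η∘h = 0, hφ = −φh, h² = (κ−1)φ², κ < 1, (1−μ/2)² > 1−κ). Define φ̃ := h/√(1−κ) and φ̃₁ := (1/(2√((1−κ)((1−μ/2)²−(1−κ)))))·((2−μ)·(φ∘h) + 2(1−κ)·φ). Then φ̃∘φ̃₁ = φ̄₋ and φ̃₁∘φ̃ = φ̄₊, where φ̄_± := ±(1/√((1−μ/2)²−(1−κ)))·((1−μ/2)φ + φh). In particular φ̃ and φ̃₁ anticommute. -/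
/-!
The almost contact relations force `φ ξ = 0`, hence `φ³ = -φ`. Together with `hφ = -φh` and
`h² = (κ - 1) φ²` this gives `h (φh) = (κ - 1) φ` and `(φh) h = (1 - κ) φ`, so both products of
`φ̃ = h / √(1 - κ)` with `φ̃₁ ∈ span {φh, φ}` are again combinations of `φ` and `φh`; comparing
coefficients leaves the scalar identity `√(1 - κ)² = 1 - κ`.
-/

section AlmostContact

variable {V : Type*} [AddCommGroup V] [Module ℝ V] {η : V →ₗ[ℝ] ℝ} {ξ : V} {φ : Module.End ℝ V}

theorem almostContact_apply_reeb_eq_zero (hξ : η ξ = 1) (hφ2 : φ ^ 2 = -1 + η.smulRight ξ) :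
    φ ξ = 0 := by
  have hφ2ξ : φ (φ ξ) = 0 := by simpa [sq, hξ] using LinearMap.congr_fun hφ2 ξ
  -- `φ² (φ ξ) = φ (φ² ξ) = 0`
  have hφξ : φ ξ = η (φ ξ) • ξ := by
    have h := LinearMap.congr_fun hφ2 (φ ξ)
    simp only [sq, Module.End.mul_apply, hφ2ξ, map_zero, LinearMap.add_apply,
      LinearMap.neg_apply, Module.End.one_apply, LinearMap.smulRight_apply] at h
    rwa [eq_comm, neg_add_eq_zero] at h
  have hsq : η (φ ξ) ^ 2 = 0 := by
    have h := congrArg η hφ2ξ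
    rw [hφξ, map_smul, hφξ, map_smul, map_smul, hξ] at h
    simpa [sq] using h
  rw [hφξ, pow_eq_zero_iff two_ne_zero |>.mp hsq, zero_smul]

theorem almostContact_mul_sq (hξ : η ξ = 1) (hφ2 : φ ^ 2 = -1 + η.smulRight ξ) :
    φ * φ ^ 2 = -φ := by
  ext v
  simp [hφ2, almostContact_apply_reeb_eq_zero hξ hφ2]

end AlmostContact

section CubeRelation

variable {R A : Type*} [CommRing R] [Ring A] [Algebra R A] {φ h : A} {c : R}

theorem mul_add_smul_of_anticomm (hcube : φ * φ ^ 2 = -φ) (hanti : h * φ = -(φ * h))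
    (hh2 : h ^ 2 = c • φ ^ 2) (x y : R) :
    h * (x • (φ * h) + y • φ) = (c * x) • φ - y • (φ * h) := by
  have hφh : h * (φ * h) = c • φ := by
    rw [← mul_assoc, hanti, neg_mul, mul_assoc, ← sq, hh2, mul_smul_comm, hcube, smul_neg, neg_neg]
  rw [mul_add, mul_smul_comm, mul_smul_comm, hφh, hanti, smul_smul, smul_neg, mul_comm,
    sub_eq_add_neg]

theorem add_smul_mul_of_sq_eq_smul (hcube : φ * φ ^ 2 = -φ)
    (hh2 : h ^ 2 = c • φ ^ 2) (x y : R) :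
    (x • (φ * h) + y • φ) * h = -(c * x) • φ + y • (φ * h) := by
  rw [add_mul, smul_mul_assoc, smul_mul_assoc, mul_assoc, ← sq, hh2, mul_smul_comm, hcube,
    smul_neg, smul_neg, smul_smul, neg_smul, mul_comm]

end CubeRelation

theorem stmt_3_general {V : Type*} [AddCommGroup V] [Module ℝ V]
    (η : V →ₗ[ℝ] ℝ) (ξ : V) (hξ : η ξ = 1)
    (φ h : Module.End ℝ V) (κ μ : ℝ) (hκ : κ < 1)
    (hμ : (1 - μ / 2) ^ 2 > 1 - κ)
    (hφ2 : φ ^ 2 = -1 + η.smulRight ξ)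
    (hanti : h * φ = -(φ * h))
    (hh2 : h ^ 2 = (κ - 1) • φ ^ 2) :
    let φt : Module.End ℝ V := (1 / Real.sqrt (1 - κ)) • h
    let φt1 : Module.End ℝ V :=
      (1 / (2 * Real.sqrt ((1 - κ) * ((1 - μ / 2) ^ 2 - (1 - κ))))) •
        ((2 - μ) • (φ * h) + (2 * (1 - κ)) • φ)
    let φbarm : Module.End ℝ V :=
      -((1 / Real.sqrt ((1 - μ / 2) ^ 2 - (1 - κ))) • ((1 - μ / 2) • φ + φ * h))
    let φbarp : Module.End ℝ V :=
      (1 / Real.sqrt ((1 - μ / 2) ^ 2 - (1 - κ))) • ((1 - μ / 2) • φ + φ * h)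
    φt * φt1 = φbarm ∧ φt1 * φt = φbarp ∧ φt * φt1 = -(φt1 * φt) := by
  intro φt φt1 φbarm φbarp
  have hcube := almostContact_mul_sq hξ hφ2
  have ha : 0 < 1 - κ := by linarith
  have hb : 0 < (1 - μ / 2) ^ 2 - (1 - κ) := by linarith
  have hs := Real.sq_sqrt ha.le
  have hs0 := Real.sqrt_pos.mpr ha
  have ht0 := Real.sqrt_pos.mpr hb
  simp only [φt, φt1, φbarm, φbarp, Real.sqrt_mul ha.le, smul_mul_assoc, mul_smul_comm,
    mul_add_smul_of_anticomm hcube hanti hh2, add_smul_mul_of_sq_eq_smul hcube hh2]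
  refine ⟨?_, ?_, ?_⟩ <;> match_scalars <;> field_simp <;> rw [hs] <;> ring

theorem stmt_3 {V : Type*} [AddCommGroup V] [Module ℝ V]
    (η : V →ₗ[ℝ] ℝ) (ξ : V) (hξ : η ξ = 1)
    (φ h : Module.End ℝ V) (κ μ : ℝ) (hκ : κ < 1)
    (hμ : (1 - μ / 2) ^ 2 > 1 - κ)
    (hφ2 : φ ^ 2 = -1 + η.smulRight ξ)
    (hhξ : h ξ = 0) (hηh : ∀ v, η (h v) = 0)
    (hanti : h * φ = -(φ * h))
    (hh2 : h ^ 2 = (κ - 1) • φ ^ 2) :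
    let φt : Module.End ℝ V := (1 / Real.sqrt (1 - κ)) • h
    let φt1 : Module.End ℝ V :=
      (1 / (2 * Real.sqrt ((1 - κ) * ((1 - μ / 2) ^ 2 - (1 - κ))))) •
        ((2 - μ) • (φ * h) + (2 * (1 - κ)) • φ)
    let φbarm : Module.End ℝ V :=
      -((1 / Real.sqrt ((1 - μ / 2) ^ 2 - (1 - κ))) • ((1 - μ / 2) • φ + φ * h))
    let φbarp : Module.End ℝ V :=
      (1 / Real.sqrt ((1 - μ / 2) ^ 2 - (1 - κ))) • ((1 - μ / 2) • φ + φ * h)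
    φt * φt1 = φbarm ∧ φt1 * φt = φbarp ∧ φt * φt1 = -(φt1 * φt) :=
  stmt_3_general η ξ hξ φ h κ μ hκ hμ hφ2 hanti hh2
end

section
/- Let V be a real inner product space (with inner product g), η a linear functional, ξ ∈ V with η = g(·,ξ), g(ξ,ξ)=1, and φ, h endomorphisms with φ² = −id + ξ·η, hξ=0, g(φX,φY)=g(X,Y)−η(X)η(Y), h symmetric with respect to g, hφ=−φh, h²=(κ−1)φ², κ<1. Suppose moreover φ∘h is symmetric with respect to g. Define g̃(X,Y) := (1/√(1−κ))·g(X, φhY) + η(X)η(Y). Then g̃ is a symmetric bilinear form, g̃(φ̃X, φ̃Y) = −g̃(X,Y) + η(X)η(Y) where φ̃ := h/√(1−κ), and g̃(X, φ̃Y) = g(X, φY) for all X, Y. -/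
/-!
Compatibility of `g` with `φ` forces `φ ξ = 0`, hence `φ³ = -φ`, and then `h² = (κ - 1) φ²`
gives `φ h² = (1 - κ) φ`. Since `η ∘ h = 0` and `g(hX, φY) = -g(X, φhY)`, each of the three
identities reduces to `c² (1 - κ) = 1` for `c = 1 / √(1 - κ)`.
-/

open RealInnerProductSpace

namespace AlmostContactMetric

variable {V : Type*} [NormedAddCommGroup V] [InnerProductSpace ℝ V]

theorem phi_reeb_eq_zero {ξ : V} {η : V →ₗ[ℝ] ℝ} {φ : V →ₗ[ℝ] V}
    (hη : ∀ X : V, η X = ⟪X, ξ⟫) (hξ : ⟪ξ, ξ⟫ = (1 : ℝ))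
    (hφg : ∀ X Y : V, ⟪φ X, φ Y⟫ = ⟪X, Y⟫ - η X * η Y) : φ ξ = 0 := by
  have hηξ : η ξ = 1 := (hη ξ).trans hξ
  refine inner_self_eq_zero (𝕜 := ℝ) |>.mp ?_
  rw [hφg, hξ, hηξ]
  norm_num

theorem phi_phi_phi_eq_neg {ξ : V} {η : V →ₗ[ℝ] ℝ} {φ : V →ₗ[ℝ] V}
    (hφ2 : ∀ X : V, φ (φ X) = -X + η X • ξ) (hφξ : φ ξ = 0) (X : V) :
    φ (φ (φ X)) = -φ X := by
  rw [hφ2 X, map_add, map_neg, map_smul, hφξ, smul_zero, add_zero]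

theorem eta_h_eq_zero {ξ : V} {η : V →ₗ[ℝ] ℝ} {h : V →ₗ[ℝ] V}
    (hη : ∀ X : V, η X = ⟪X, ξ⟫) (hhξ : h ξ = 0)
    (hsym : ∀ X Y : V, ⟪h X, Y⟫ = ⟪X, h Y⟫) (X : V) : η (h X) = 0 := by
  rw [hη, hsym, hhξ, inner_zero_right]

theorem phi_h_h_eq {φ h : V →ₗ[ℝ] V} {κ : ℝ}
    (hφ3 : ∀ X : V, φ (φ (φ X)) = -φ X)
    (hh2 : ∀ X : V, h (h X) = (κ - 1) • φ (φ X)) (X : V) :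
    φ (h (h X)) = (1 - κ) • φ X := by
  rw [hh2, map_smul, hφ3, smul_neg, ← neg_smul, neg_sub]

theorem inner_h_phi_eq_neg {φ h : V →ₗ[ℝ] V}
    (hsym : ∀ X Y : V, ⟪h X, Y⟫ = ⟪X, h Y⟫) (hanti : ∀ X : V, h (φ X) = -φ (h X))
    (X Y : V) : ⟪h X, φ Y⟫ = -⟪X, φ (h Y)⟫ := by
  rw [hsym, hanti, inner_neg_right]

end AlmostContactMetric

open AlmostContactMetric in
theorem stmt_11 {V : Type*} [NormedAddCommGroup V] [InnerProductSpace ℝ V]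
    (ξ : V) (η : V →ₗ[ℝ] ℝ) (hη : ∀ X : V, η X = ⟪X, ξ⟫)
    (hξ : ⟪ξ, ξ⟫ = (1 : ℝ))
    (φ h : V →ₗ[ℝ] V) (κ : ℝ) (hκ : κ < 1)
    (hφ2 : ∀ X : V, φ (φ X) = -X + η X • ξ)
    (hhξ : h ξ = 0)
    (hφg : ∀ X Y : V, ⟪φ X, φ Y⟫ = ⟪X, Y⟫ - η X * η Y)
    (hsym : ∀ X Y : V, ⟪h X, Y⟫ = ⟪X, h Y⟫)
    (hanti : ∀ X : V, h (φ X) = -φ (h X))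
    (hh2 : ∀ X : V, h (h X) = (κ - 1) • φ (φ X))
    (hφhsym : ∀ X Y : V, ⟪φ (h X), Y⟫ = ⟪X, φ (h Y)⟫) :
    let gt : V → V → ℝ := fun X Y =>
      (1 / Real.sqrt (1 - κ)) * ⟪X, φ (h Y)⟫ + η X * η Y
    let φt : V → V := fun X => (1 / Real.sqrt (1 - κ)) • h X
    (∀ X Y : V, gt X Y = gt Y X) ∧
    (∀ X Y : V, gt (φt X) (φt Y) = -gt X Y + η X * η Y) ∧
    (∀ X Y : V, gt X (φt Y) = ⟪X, φ Y⟫) := by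
  intro gt φt
  set c := 1 / Real.sqrt (1 - κ)
  have hc : c * c * (1 - κ) = 1 := by
    have hpos : 0 < 1 - κ := by linarith
    simp only [c, div_mul_div_comm, one_mul, Real.mul_self_sqrt hpos.le]
    exact div_mul_cancel₀ 1 hpos.ne'
  have hφhh := phi_h_h_eq (phi_phi_phi_eq_neg hφ2 (phi_reeb_eq_zero hη hξ hφg)) hh2
  have hηh := eta_h_eq_zero hη hhξ hsym
  refine ⟨fun X Y => ?_, fun X Y => ?_, fun X Y => ?_⟩
  · simp only [gt, real_inner_comm X, ← hφhsym, mul_comm (η X)]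
  · simp only [gt, φt, map_smul, inner_smul_left, inner_smul_right, hφhh, hηh,
      inner_h_phi_eq_neg hsym hanti, conj_trivial]
    linear_combination (-c * ⟪X, φ (h Y)⟫) * hc
  · simp only [gt, φt, map_smul, inner_smul_right, hφhh, hηh]
    linear_combination ⟪X, φ Y⟫ * hc
end

section
/- Under the hypotheses of the previous context, and assuming additionally that (1−μ/2)² < 1−κ, decompose any X with η(X)=0 as X = X₊ + X₋ where hX₊ = √(1−κ)·X₊ and hX₋ = −√(1−κ)·X₋. Let α := 1/(2√((1−κ)(1−κ−(1−μ/2)²))) and define g₁(X,X) := α(2−μ)g(X,hX) + 2α(1−κ)g(X,X). Then g₁(X,X) = α√(1−κ)·(2√(1−κ)−μ+2)·g(X₊,X₊) + α√(1−κ)·(2√(1−κ)+μ−2)·g(X₋,X₋), and both coefficients α√(1−κ)(2√(1−κ)−μ+2) and α√(1−κ)(2√(1−κ)+μ−2) are strictly positive; hence g₁(X,X) > 0 for X ≠ 0 in ker η. -/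
open RealInnerProductSpace

theorem stmt_12 {V : Type*} [NormedAddCommGroup V] [InnerProductSpace ℝ V]
    (ξ : V) (η : V →ₗ[ℝ] ℝ) (hη : ∀ X : V, η X = ⟪X, ξ⟫)
    (hξ : ⟪ξ, ξ⟫ = (1 : ℝ))
    (φ h : V →ₗ[ℝ] V) (κ μ : ℝ) (hκ : κ < 1)
    (hμ : (1 - μ / 2) ^ 2 < 1 - κ)
    (hφ2 : ∀ X : V, φ (φ X) = -X + η X • ξ)
    (hhξ : h ξ = 0)
    (hφg : ∀ X Y : V, ⟪φ X, φ Y⟫ = ⟪X, Y⟫ - η X * η Y)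
    (hsym : ∀ X Y : V, ⟪h X, Y⟫ = ⟪X, h Y⟫)
    (hanti : ∀ X : V, h (φ X) = -φ (h X))
    (hh2 : ∀ X : V, h (h X) = (κ - 1) • φ (φ X))
    (X Xp Xm : V) (hdec : X = Xp + Xm) (hXη : η X = 0)
    (hXp : h Xp = Real.sqrt (1 - κ) • Xp)
    (hXm : h Xm = -(Real.sqrt (1 - κ)) • Xm) :
    let α : ℝ := 1 / (2 * Real.sqrt ((1 - κ) * (1 - κ - (1 - μ / 2) ^ 2)))
    (α * (2 - μ) * ⟪X, h X⟫ + 2 * α * (1 - κ) * ⟪X, X⟫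
        = α * Real.sqrt (1 - κ) * (2 * Real.sqrt (1 - κ) - μ + 2) * ⟪Xp, Xp⟫
          + α * Real.sqrt (1 - κ) * (2 * Real.sqrt (1 - κ) + μ - 2) * ⟪Xm, Xm⟫) ∧
    0 < α * Real.sqrt (1 - κ) * (2 * Real.sqrt (1 - κ) - μ + 2) ∧
    0 < α * Real.sqrt (1 - κ) * (2 * Real.sqrt (1 - κ) + μ - 2) ∧
    (X ≠ 0 → 0 < α * (2 - μ) * ⟪X, h X⟫ + 2 * α * (1 - κ) * ⟪X, X⟫) := by
  intro α
  set s := Real.sqrt (1 - κ) with hsdef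
  have h1κ : (0:ℝ) < 1 - κ := by linarith
  have hs : 0 < s := Real.sqrt_pos.mpr h1κ
  have hs2 : s * s = 1 - κ := Real.mul_self_sqrt h1κ.le
  have hαpos : 0 < α := by
    have h0 : (0:ℝ) < (1 - κ) * (1 - κ - (1 - μ / 2) ^ 2) :=
      mul_pos h1κ (by linarith)
    have := Real.sqrt_pos.mpr h0
    positivity
  have horth : ⟪Xp, Xm⟫ = 0 := by
    have h1 := hsym Xp Xm
    rw [hXp, hXm, real_inner_smul_left, real_inner_smul_right] at h1
    have h2 : (2 * s) * ⟪Xp, Xm⟫ = 0 := by linarith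
    have h2s : (2 * s) ≠ 0 := by positivity
    exact (mul_eq_zero.mp h2).resolve_left h2s
  have horth' : ⟪Xm, Xp⟫ = 0 := by rw [real_inner_comm]; exact horth
  set a := ⟪Xp, Xp⟫ with ha
  set b := ⟪Xm, Xm⟫ with hb
  have hXhX : ⟪X, h X⟫ = s * a - s * b := by
    rw [hdec, map_add, hXp, hXm]
    simp only [inner_add_left, inner_add_right, real_inner_smul_right, neg_smul,
      inner_neg_right, horth, horth', ← ha, ← hb]
    ring
  have hXX : ⟪X, X⟫ = a + b := by
    rw [hdec]
    simp only [inner_add_left, inner_add_right, horth, horth', ← ha, ← hb]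
    ring
  have hpm : 2 * s - μ + 2 > 0 ∧ 2 * s + μ - 2 > 0 := by
    constructor <;> nlinarith [hμ, hs, hs2]
  have hc1 : 0 < α * s * (2 * s - μ + 2) := by have := hpm.1; positivity
  have hc2 : 0 < α * s * (2 * s + μ - 2) := by have := hpm.2; positivity
  have key : α * (2 - μ) * ⟪X, h X⟫ + 2 * α * (1 - κ) * ⟪X, X⟫
      = α * s * (2 * s - μ + 2) * a + α * s * (2 * s + μ - 2) * b := by
    rw [hXhX, hXX]
    linear_combination (-(2 * α * (a + b))) * hs2
  refine ⟨key, hc1, hc2, ?_⟩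
  intro hX0
  have hXXpos : 0 < ⟪X, X⟫ := by
    rcases lt_or_eq_of_le (real_inner_self_nonneg (x := X)) with h' | h'
    · exact h'
    · exact absurd (inner_self_eq_zero.mp h'.symm) hX0
  rw [hXX] at hXXpos
  have hann : 0 ≤ a := real_inner_self_nonneg
  have hbnn : 0 ≤ b := real_inner_self_nonneg
  rw [key]
  rcases lt_or_eq_of_le hann with ha' | ha'
  · exact add_pos_of_pos_of_nonneg (mul_pos hc1 ha') (mul_nonneg hc2.le hbnn)
  · have hb' : 0 < b := by rw [← ha'] at hXXpos; linarith
    exact add_pos_of_nonneg_of_pos (mul_nonneg hc1.le hann) (mul_pos hc2 hb')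
end

section
/- Let V, η, ξ, φ, h, κ, μ be with φ² = −id + ξ·η, hξ=0, η∘h=0, hφ=−φh, h²=(κ−1)φ², κ<1, (1−μ/2)² < 1−κ. Set h̃ := (1/(2√(1−κ)))((2−μ)φh + 2(1−κ)φ) and φ₁ := h̃/√(1−κ−(1−μ/2)²). Then φ₁² = −id + ξ·η. -/
/-!
Write `A := (2 - μ) • (φ * h) + 2(1 - κ) • φ`. The anticommutation `h φ = -φ h` kills the cross
terms of `A ^ 2` and turns `(φ h) ^ 2` into `-φ² h² = (1 - κ) φ⁴`; since `φ² = -1 + ξ ⊗ η` with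
`ξ ⊗ η` idempotent, `φ⁴ = -φ²`. Altogether `A ^ 2 = 4 (1 - κ) (1 - κ - (1 - μ/2)²) φ²`, and the
prefactors in `φ₁` are exactly the inverse square root of this coefficient.
-/

theorem LinearMap.isIdempotentElem_smulRight {R V : Type*} [CommSemiring R] [AddCommMonoid V]
    [Module R V] {η : V →ₗ[R] R} {ξ : V} (hξ : η ξ = 1) :
    IsIdempotentElem (η.smulRight ξ) := by
  ext v
  simp [Module.End.mul_apply, hξ]

theorem IsIdempotentElem.neg_one_add_sq {R : Type*} [Ring R] {e : R} (he : IsIdempotentElem e) :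
    (-1 + e) ^ 2 = -(-1 + e) := by
  have h : -1 + e = -(1 - e) := by abel
  rw [h, neg_sq, he.one_sub.pow_eq two_ne_zero, neg_neg]

theorem sq_smul_mul_add_smul_of_anticomm {R A : Type*} [CommRing R] [Ring A] [Algebra R A]
    {φ h : A} {c : R} (hanti : h * φ = -(φ * h)) (hh2 : h ^ 2 = c • φ ^ 2) (a b : R) :
    (a • (φ * h) + b • φ) ^ 2 = b ^ 2 • φ ^ 2 - (a ^ 2 * c) • (φ ^ 2) ^ 2 := by
  have hφhφh : (φ * h) * (φ * h) = -(φ ^ 2 * h ^ 2) := by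
    rw [show (φ * h) * (φ * h) = φ * (h * φ) * h by noncomm_ring, hanti]
    noncomm_ring
  have hφhφ : (φ * h) * φ = -(φ * (φ * h)) := by
    rw [mul_assoc, hanti, mul_neg]
  rw [sq, mul_add, add_mul, add_mul, smul_mul_smul_comm, smul_mul_smul_comm, smul_mul_smul_comm,
    smul_mul_smul_comm, hφhφh, hφhφ, hh2, mul_smul_comm, ← mul_assoc φ φ h, ← sq φ, ← sq (φ ^ 2)]
  match_scalars <;> ring

theorem Real.inv_sqrt_mul_inv_two_mul_sqrt_sq_mul {b d : ℝ} (hb : 0 < b) (hd : 0 < d) :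
    (1 / √d * (1 / (2 * √b))) ^ 2 * (4 * b * d) = 1 := by
  rw [mul_pow, div_pow, div_pow, mul_pow, Real.sq_sqrt hb.le, Real.sq_sqrt hd.le]
  field_simp
  ring

theorem stmt_13_general {V : Type*} [AddCommGroup V] [Module ℝ V]
    (η : V →ₗ[ℝ] ℝ) (ξ : V) (hξ : η ξ = 1)
    (φ h : Module.End ℝ V) (κ μ : ℝ)
    (hμ : (1 - μ / 2) ^ 2 < 1 - κ)
    (hφ2 : φ ^ 2 = -1 + η.smulRight ξ)
    (hanti : h * φ = -(φ * h))
    (hh2 : h ^ 2 = (κ - 1) • φ ^ 2) :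
    let ht : Module.End ℝ V :=
      (1 / (2 * Real.sqrt (1 - κ))) • ((2 - μ) • (φ * h) + (2 * (1 - κ)) • φ)
    ((1 / Real.sqrt (1 - κ - (1 - μ / 2) ^ 2)) • ht) ^ 2 = -1 + η.smulRight ξ := by
  intro ht
  have hd : 0 < 1 - κ - (1 - μ / 2) ^ 2 := sub_pos.mpr hμ
  have hb : 0 < 1 - κ := (sq_nonneg _).trans_lt hμ
  have hφ4 : (φ ^ 2) ^ 2 = -φ ^ 2 := by
    rw [hφ2, (LinearMap.isIdempotentElem_smulRight hξ).neg_one_add_sq]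
  have hA : ((2 - μ) • (φ * h) + (2 * (1 - κ)) • φ) ^ 2
      = (4 * (1 - κ) * (1 - κ - (1 - μ / 2) ^ 2)) • φ ^ 2 := by
    rw [sq_smul_mul_add_smul_of_anticomm hanti hh2, hφ4]
    match_scalars
    ring
  rw [smul_smul, smul_pow, hA, smul_smul, Real.inv_sqrt_mul_inv_two_mul_sqrt_sq_mul hb hd,
    one_smul, hφ2]

theorem stmt_13 {V : Type*} [AddCommGroup V] [Module ℝ V]
    (η : V →ₗ[ℝ] ℝ) (ξ : V) (hξ : η ξ = 1)
    (φ h : Module.End ℝ V) (κ μ : ℝ) (hκ : κ < 1)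
    (hμ : (1 - μ / 2) ^ 2 < 1 - κ)
    (hφ2 : φ ^ 2 = -1 + η.smulRight ξ)
    (hhξ : h ξ = 0) (hηh : ∀ v, η (h v) = 0)
    (hanti : h * φ = -(φ * h))
    (hh2 : h ^ 2 = (κ - 1) • φ ^ 2) :
    let ht : Module.End ℝ V :=
      (1 / (2 * Real.sqrt (1 - κ))) • ((2 - μ) • (φ * h) + (2 * (1 - κ)) • φ)
    ((1 / Real.sqrt (1 - κ - (1 - μ / 2) ^ 2)) • ht) ^ 2 = -1 + η.smulRight ξ :=
  stmt_13_general η ξ hξ φ h κ μ hμ hφ2 hanti hh2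
end

section
/- Let V, η, ξ, φ, h be as before (φ² = −id+ξ·η, hξ=0, η∘h=0, hφ=−φh, h²=(κ−1)φ², κ<1) with (1−μ/2)² > 1−κ, and let {X₁,…,Xₙ,Y₁,…,Yₙ,ξ} be a basis with Yᵢ = φXᵢ, hXᵢ = √(1−κ)Xᵢ, hYᵢ = −√(1−κ)Yᵢ. Set h̃ := (1/(2√(1−κ)))((2−μ)φh + 2(1−κ)φ) and γ := √((I−1)/(I+1)) where I := (1−μ/2)/√(1−κ), assuming |I| > 1 and I > 1. Then h̃(γXᵢ + Yᵢ) = λ̃·(γXᵢ + Yᵢ) and h̃(−γXᵢ + Yᵢ) = −λ̃·(−γXᵢ + Yᵢ), where λ̃ := √((1−μ/2)² − (1−κ)). -/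
theorem stmt_19 {V : Type*} [AddCommGroup V] [Module ℝ V] (n : ℕ)
    (η : V →ₗ[ℝ] ℝ) (ξ : V) (hξ : η ξ = 1)
    (φ h : Module.End ℝ V) (κ μ : ℝ) (hκ : κ < 1)
    (hμ : (1 - μ / 2) ^ 2 > 1 - κ)
    (hφ2 : φ ^ 2 = -1 + η.smulRight ξ)
    (hhξ : h ξ = 0) (hηh : ∀ v, η (h v) = 0)
    (hanti : h * φ = -(φ * h))
    (hh2 : h ^ 2 = (κ - 1) • φ ^ 2)
    (X Y : Fin n → V)
    (hY : ∀ i, Y i = φ (X i))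
    (hXe : ∀ i, h (X i) = Real.sqrt (1 - κ) • X i)
    (hYe : ∀ i, h (Y i) = -(Real.sqrt (1 - κ)) • Y i)
    (hI : 1 < (1 - μ / 2) / Real.sqrt (1 - κ)) :
    let ht : Module.End ℝ V :=
      (1 / (2 * Real.sqrt (1 - κ))) • ((2 - μ) • (φ * h) + (2 * (1 - κ)) • φ)
    let I : ℝ := (1 - μ / 2) / Real.sqrt (1 - κ)
    let γ : ℝ := Real.sqrt ((I - 1) / (I + 1))
    let lt : ℝ := Real.sqrt ((1 - μ / 2) ^ 2 - (1 - κ))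
    ∀ i, ht (γ • X i + Y i) = lt • (γ • X i + Y i) ∧
      ht (-γ • X i + Y i) = -lt • (-γ • X i + Y i) := by
  intro ht I γ lt i
  set s : ℝ := Real.sqrt (1 - κ) with hs_def
  set a : ℝ := 1 - μ / 2 with ha_def
  have hs : 0 < s := Real.sqrt_pos.mpr (by linarith)
  have hs2 : s ^ 2 = 1 - κ := Real.sq_sqrt (by linarith)
  have has : s < a := by
    have := (one_lt_div hs).mp hI
    linarith
  have hap : (0:ℝ) < a + s := by linarith
  have ham : (0:ℝ) < a - s := by linarith
  -- η (X i) = 0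
  have hηX : η (X i) = 0 := by
    have h1 := hηh (X i)
    rw [hXe i, map_smul] at h1
    have : s ≠ 0 := ne_of_gt hs
    simpa [this] using h1
  -- φ (Y i) = - X i
  have hφY : φ (Y i) = -X i := by
    have h1 : (φ ^ 2) (X i) = (-1 + η.smulRight ξ) (X i) := by rw [hφ2]
    simp only [pow_two, Module.End.mul_apply, LinearMap.add_apply, LinearMap.neg_apply,
      Module.End.one_apply, LinearMap.smulRight_apply, hηX, zero_smul, add_zero] at h1
    rw [hY i, h1]
  -- action of ht on X i and Y i
  have htX : ht (X i) = (a + s) • Y i := by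
    show ((1 / (2 * s)) • ((2 - μ) • (φ * h) + (2 * (1 - κ)) • φ)) (X i) = (a + s) • Y i
    simp only [LinearMap.smul_apply, LinearMap.add_apply, Module.End.mul_apply]
    rw [hXe i, map_smul, ← hY i]
    have hsne : s ≠ 0 := ne_of_gt hs
    match_scalars
    field_simp
    linear_combination (-2 : ℝ) * hs2
  have htY : ht (Y i) = (a - s) • X i := by
    show ((1 / (2 * s)) • ((2 - μ) • (φ * h) + (2 * (1 - κ)) • φ)) (Y i) = (a - s) • X i
    simp only [LinearMap.smul_apply, LinearMap.add_apply, Module.End.mul_apply]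
    rw [hYe i, map_smul, hφY]
    have hsne : s ≠ 0 := ne_of_gt hs
    match_scalars
    field_simp
    linear_combination (2 : ℝ) * hs2
  -- scalar identities
  have hIas : (I - 1) / (I + 1) = (a - s) / (a + s) := by
    have hsne : s ≠ 0 := ne_of_gt hs
    have hIdef : I = a / s := rfl
    rw [hIdef, div_eq_div_iff (by positivity) (ne_of_gt hap)]
    field_simp
  have hγ2 : γ ^ 2 = (a - s) / (a + s) := by
    have h1 : γ = Real.sqrt ((a - s) / (a + s)) := by
      rw [show γ = Real.sqrt ((I-1)/(I+1)) from rfl, hIas]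
    rw [h1, Real.sq_sqrt (le_of_lt (div_pos ham hap))]
  have hlt : lt = γ * (a + s) := by
    have h1 : lt = Real.sqrt ((a - s) * (a + s)) := by
      show Real.sqrt (a ^ 2 - (1 - κ)) = _
      rw [← hs2]; congr 1; ring
    have h2 : (a - s) * (a + s) = ((a - s) / (a + s)) * (a + s) ^ 2 := by
      field_simp
    rw [h1, h2, Real.sqrt_mul (le_of_lt (div_pos ham hap)), Real.sqrt_sq (le_of_lt hap),
      show γ = Real.sqrt ((I-1)/(I+1)) from rfl, hIas]
  have hltγ : lt * γ = a - s := by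
    rw [hlt, show γ * (a + s) * γ = γ ^ 2 * (a + s) by ring, hγ2,
      div_mul_cancel₀ _ (ne_of_gt hap)]
  constructor
  · rw [map_add, map_smul, htX, htY]
    match_scalars
    · linear_combination -hlt
    · linear_combination -hltγ
  · rw [map_add, map_smul, htX, htY]
    match_scalars
    · linear_combination hlt
    · linear_combination -hltγ
end
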